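/- Let I be a real interval, f : I → ℝ convex, (x_1, …, x_m) self-adjoint n×n complex matrices with spectra in I, and (a_1, …, a_m) n×n matrices with ∑_{k=1}^m a_k* a_k = 1. Set y = ∑_{k=1}^m a_k* x_k a_k. Then for every unit vector ξ ∈ ℂⁿ that is an eigenvector of y, one has ( f(y) ξ | ξ ) ≤ ∑_{k=1}^m ( a_k* f(x_k) a_k ξ | ξ ). -/

import Mathlib

/-!
If `y ξ = c ξ`, then in an eigenbasis of `y` the vector `ξ` only has components along eigenvectors
of eigenvalue `c`, so `f(y) ξ = f(c) ξ` and the left-hand side is `f(c) = f((y ξ | ξ))`.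
Expanding each `a_k ξ` in an orthonormal eigenbasis `(e_{k,i})` of `x_k` turns
`(y ξ | ξ) = ∑_k (x_k a_k ξ | a_k ξ)` into `∑_{k,i} w_{k,i} λ_{k,i}` and the right-hand side into
`∑_{k,i} w_{k,i} f(λ_{k,i})`, where the `λ_{k,i} ∈ I` are the eigenvalues of the `x_k` and the
weights `w_{k,i} = |(a_k ξ | e_{k,i})|²` sum to `(∑_k a_k* a_k ξ | ξ) = 1`.
The inequality is then the scalar Jensen inequality for `f`.
-/

open scoped ComplexOrder
open Matrix

lemma Matrix.star_dotProduct_conjTranspose_mul_mul_mulVec {R m n : Type*} [Semiring R] [StarRing R]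
    [Fintype m] [Fintype n] (B : Matrix m n R) (M : Matrix m m R) (v : n → R) :
    star v ⬝ᵥ (Bᴴ * M * B) *ᵥ v = star (B *ᵥ v) ⬝ᵥ M *ᵥ (B *ᵥ v) := by
  rw [star_mulVec, ← mulVec_mulVec, ← mulVec_mulVec, dotProduct_mulVec]

namespace Matrix.IsHermitian

variable {𝕜 n : Type*} [RCLike 𝕜] [Fintype n] [DecidableEq n] {A : Matrix n n 𝕜}

noncomputable def spectralWeight (hA : A.IsHermitian) (v : n → 𝕜) (i : n) : ℝ :=
  ‖(star (hA.eigenvectorUnitary : Matrix n n 𝕜) *ᵥ v) i‖ ^ 2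

lemma star_dotProduct_cfc_mulVec (hA : A.IsHermitian) (f : ℝ → ℝ) (v : n → 𝕜) :
    star v ⬝ᵥ hA.cfc f *ᵥ v = ((∑ i, f (hA.eigenvalues i) * hA.spectralWeight v i : ℝ) : 𝕜) := by
  set V := (hA.eigenvectorUnitary : Matrix n n 𝕜)
  have hcfc : hA.cfc f = (star V)ᴴ * diagonal (RCLike.ofReal ∘ f ∘ hA.eigenvalues) * star V := by
    rw [IsHermitian.cfc, Unitary.conjStarAlgAut_apply, ← star_eq_conjTranspose, star_star]
  rw [hcfc, star_dotProduct_conjTranspose_mul_mul_mulVec]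
  simp only [dotProduct, mulVec_diagonal, Pi.star_apply, Function.comp_apply, spectralWeight,
    RCLike.star_def, RCLike.ofReal_sum, RCLike.ofReal_mul, RCLike.ofReal_pow]
  refine Finset.sum_congr rfl fun i _ ↦ ?_
  rw [mul_left_comm, RCLike.conj_mul]

lemma sum_spectralWeight (hA : A.IsHermitian) (v : n → 𝕜) :
    ∑ i, hA.spectralWeight v i = RCLike.re (star v ⬝ᵥ v) := by
  have := hA.star_dotProduct_cfc_mulVec (fun _ ↦ 1) v
  rw [← cfc_eq, cfc_const_one ℝ A, one_mulVec] at this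
  simp [this]

lemma sum_eigenvalues_mul_spectralWeight (hA : A.IsHermitian) (v : n → 𝕜) :
    ∑ i, hA.eigenvalues i * hA.spectralWeight v i = RCLike.re (star v ⬝ᵥ A *ᵥ v) := by
  have := hA.star_dotProduct_cfc_mulVec (fun r ↦ r) v
  rw [← cfc_eq, cfc_id' ℝ A] at this
  rw [this, RCLike.ofReal_re]

lemma cfc_mulVec_of_mulVec_eq_smul (hA : A.IsHermitian) (f : ℝ → ℝ) {v : n → 𝕜} {c : 𝕜}
    (hv : A *ᵥ v = c • v) : hA.cfc f *ᵥ v = (f (RCLike.re c) : 𝕜) • v := by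
  set V := (hA.eigenvectorUnitary : Matrix n n 𝕜)
  have hVV : V * star V = 1 := Unitary.mul_star_self_of_mem hA.eigenvectorUnitary.2
  have hdiag : diagonal (RCLike.ofReal ∘ hA.eigenvalues) *ᵥ (star V *ᵥ v) = c • (star V *ᵥ v) := by
    rw [← hA.conjStarAlgAut_star_eigenvectorUnitary, Unitary.conjStarAlgAut_star_apply,
      ← mulVec_mulVec, ← mulVec_mulVec, mulVec_mulVec v, hVV, one_mulVec, hv, mulVec_smul]
  have hfdiag : diagonal (RCLike.ofReal ∘ f ∘ hA.eigenvalues) *ᵥ (star V *ᵥ v) =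
      (f (RCLike.re c) : 𝕜) • (star V *ᵥ v) := by
    ext i
    have hi := congrFun hdiag i
    simp only [mulVec_diagonal, Function.comp_apply, Pi.smul_apply, smul_eq_mul] at hi ⊢
    rcases eq_or_ne ((star V *ᵥ v) i) 0 with h0 | h0
    · rw [h0, mul_zero, mul_zero]
    · rw [← mul_right_cancel₀ h0 hi, RCLike.ofReal_re]
  rw [IsHermitian.cfc, Unitary.conjStarAlgAut_apply, ← mulVec_mulVec, ← mulVec_mulVec, hfdiag,
    mulVec_smul, mulVec_mulVec, hVV, one_mulVec]

end Matrix.IsHermitian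

open Matrix.IsHermitian in
theorem ConvexOn.map_sum_re_dotProduct_mulVec_le_sum_cfc {𝕜 ι n : Type*} [RCLike 𝕜] [Fintype ι]
    [Fintype n] [DecidableEq n] {I : Set ℝ} {f : ℝ → ℝ} (hf : ConvexOn ℝ I f) {x : ι → Matrix n n 𝕜}
    (hx : ∀ k, (x k).IsHermitian) (hspec : ∀ k, spectrum ℝ (x k) ⊆ I) {v : ι → n → 𝕜}
    (hv : ∑ k, star (v k) ⬝ᵥ v k = 1) :
    (f (∑ k, RCLike.re (star (v k) ⬝ᵥ x k *ᵥ v k)) : 𝕜) ≤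
      ∑ k, star (v k) ⬝ᵥ (hx k).cfc f *ᵥ v k := by
  set w : ι → n → ℝ := fun k ↦ (hx k).spectralWeight (v k) with hw
  set μ : ι → n → ℝ := fun k ↦ (hx k).eigenvalues with hμ
  have hw_sum : ∑ p : ι × n, w p.1 p.2 = 1 := by
    rw [Fintype.sum_prod_type']
    simp only [hw, sum_spectralWeight, ← map_sum, hv, RCLike.one_re]
  calc (f (∑ k, RCLike.re (star (v k) ⬝ᵥ x k *ᵥ v k)) : 𝕜)
      = (f (∑ p : ι × n, w p.1 p.2 • μ p.1 p.2) : 𝕜) := by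
        rw [Fintype.sum_prod_type' fun k i ↦ w k i • μ k i]
        simp only [hw, hμ, smul_eq_mul, mul_comm, sum_eigenvalues_mul_spectralWeight]
    _ ≤ ((∑ p : ι × n, w p.1 p.2 • f (μ p.1 p.2) : ℝ) : 𝕜) := RCLike.ofReal_le_ofReal.2 <|
        hf.map_sum_le (fun _ _ ↦ sq_nonneg _) hw_sum
          (fun p _ ↦ hspec p.1 ((hx p.1).eigenvalues_mem_spectrum_real p.2))
    _ = ∑ k, star (v k) ⬝ᵥ (hx k).cfc f *ᵥ v k := by
        rw [Fintype.sum_prod_type' fun k i ↦ w k i • f (μ k i)]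
        simp only [hw, hμ, star_dotProduct_cfc_mulVec, RCLike.ofReal_sum, smul_eq_mul, mul_comm]

theorem jensen_eigenvector_inequality_general
    (I : Set ℝ) (f : ℝ → ℝ) (hf : ConvexOn ℝ I f)
    (n m : ℕ) (x a : Fin m → Matrix (Fin n) (Fin n) ℂ)
    (hx : ∀ k, (x k).IsHermitian)
    (hspec : ∀ k, spectrum ℝ (x k) ⊆ I)
    (ha : ∑ k, (a k)ᴴ * a k = 1)
    (y : Matrix (Fin n) (Fin n) ℂ) (hy_def : y = ∑ k, (a k)ᴴ * x k * a k)
    (hy : y.IsHermitian)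
    (ξ : Fin n → ℂ) (hξ : star ξ ⬝ᵥ ξ = 1)
    (heig : ∃ c : ℂ, y.mulVec ξ = c • ξ) :
    star ξ ⬝ᵥ (hy.cfc f).mulVec ξ ≤
      ∑ k, star ξ ⬝ᵥ ((a k)ᴴ * (hx k).cfc f * a k).mulVec ξ := by
  obtain ⟨c, hc⟩ := heig
  have hquad (M : Fin m → Matrix (Fin n) (Fin n) ℂ) :
      star ξ ⬝ᵥ (∑ k, (a k)ᴴ * M k * a k) *ᵥ ξ = ∑ k, star (a k *ᵥ ξ) ⬝ᵥ M k *ᵥ (a k *ᵥ ξ) := by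
    simp only [sum_mulVec, dotProduct_sum, star_dotProduct_conjTranspose_mul_mul_mulVec]
  have hunit : ∑ k, star (a k *ᵥ ξ) ⬝ᵥ a k *ᵥ ξ = 1 := by
    simpa only [mul_one, ha, one_mulVec, hξ] using (hquad fun _ ↦ 1).symm
  have hc_eq : c = ∑ k, star (a k *ᵥ ξ) ⬝ᵥ x k *ᵥ (a k *ᵥ ξ) := by
    rw [← hquad, ← hy_def, hc, dotProduct_smul, hξ, smul_eq_mul, mul_one]
  calc star ξ ⬝ᵥ hy.cfc f *ᵥ ξ = f (RCLike.re c) := by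
        simp only [hy.cfc_mulVec_of_mulVec_eq_smul f hc, dotProduct_smul, hξ, smul_eq_mul, mul_one,
          Complex.coe_algebraMap]
    _ = f (∑ k, RCLike.re (star (a k *ᵥ ξ) ⬝ᵥ x k *ᵥ (a k *ᵥ ξ))) := by rw [hc_eq, map_sum]
    _ ≤ ∑ k, star (a k *ᵥ ξ) ⬝ᵥ (hx k).cfc f *ᵥ (a k *ᵥ ξ) :=
        hf.map_sum_re_dotProduct_mulVec_le_sum_cfc hx hspec hunit
    _ = ∑ k, star ξ ⬝ᵥ ((a k)ᴴ * (hx k).cfc f * a k) *ᵥ ξ := by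
        simp only [star_dotProduct_conjTranspose_mul_mul_mulVec]

/-- If `f` is convex on an interval `I`, the `x k` are Hermitian `n × n` matrices with
spectra in `I`, `(a 1, …, a m)` is a unital column (`∑ k, (a k)ᴴ * a k = 1`), and
`y = ∑ k, (a k)ᴴ * x k * a k`, then for every unit vector `ξ` which is an eigenvector
of `y` one has `(f(y) ξ | ξ) ≤ ∑ k ((a k)ᴴ f(x k) (a k) ξ | ξ)`.  Here
`(u | ξ) = star ξ ⬝ᵥ u` is the inner product on `ℂⁿ` (linear in the first variable). -/
theorem jensen_eigenvector_inequality
    (I : Set ℝ) (hI : I.OrdConnected) (f : ℝ → ℝ) (hf : ConvexOn ℝ I f)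
    (n m : ℕ) (x a : Fin m → Matrix (Fin n) (Fin n) ℂ)
    (hx : ∀ k, (x k).IsHermitian)
    (hspec : ∀ k, spectrum ℝ (x k) ⊆ I)
    (ha : ∑ k, (a k)ᴴ * a k = 1)
    (y : Matrix (Fin n) (Fin n) ℂ) (hy_def : y = ∑ k, (a k)ᴴ * x k * a k)
    (hy : y.IsHermitian)
    (ξ : Fin n → ℂ) (hξ : star ξ ⬝ᵥ ξ = 1)
    (heig : ∃ c : ℂ, y.mulVec ξ = c • ξ) :
    star ξ ⬝ᵥ (hy.cfc f).mulVec ξ ≤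
      ∑ k, star ξ ⬝ᵥ ((a k)ᴴ * (hx k).cfc f * a k).mulVec ξ :=
  jensen_eigenvector_inequality_general I f hf n m x a hx hspec ha y hy_def hy ξ hξ heig
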